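/- arXiv:math/9201273 — 6 statements merged into one kernel-verified Lean document; each statement's English description precedes it below -/
import Mathlib

section
/- The cubic map f(x) = x³ - 3Ax + b (A, b real, B = b²) has a fixed point with derivative f' equal to 1 at that point if and only if B = 4(A + 1/3)³. More precisely, there exists κ ∈ ℝ with f(κ) = κ and f'(κ) = 1 if and only if b² = 4(A + 1/3)³. -/
/-- `f x = x³ - 3Ax + b` has a real fixed point with multiplier `1`
iff `b² = 4(A + 1/3)³` (the curve `Per₁(1)`). -/
theorem stmt_6 (A b : ℝ) :
    (∃ κ : ℝ, κ ^ 3 - 3 * A * κ + b = κ ∧ 3 * κ ^ 2 - 3 * A = 1) ↔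
      b ^ 2 = 4 * (A + 1 / 3) ^ 3 := by
  constructor
  · rintro ⟨κ, h1, h2⟩
    have hk : κ ^ 2 = A + 1 / 3 := by linarith
    have hb : b = 2 * κ * (A + 1 / 3) := by linear_combination h1 - κ * hk
    linear_combination (b + 2 * κ * (A + 1 / 3)) * hb + 4 * (A + 1 / 3) ^ 2 * hk
  · intro h
    rcases eq_or_ne (A + 1 / 3) 0 with h0 | h0
    · have hb2 : b ^ 2 = 0 := by rw [h, h0]; ring
      have hb : b = 0 := by
        exact pow_eq_zero_iff (by norm_num) |>.mp hb2
      exact ⟨0, by simp [hb], by linarith⟩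
    · have hd : (2 * (A + 1 / 3)) ≠ 0 := mul_ne_zero two_ne_zero h0
      set κ := b / (2 * (A + 1 / 3)) with hκ
      have hbk : κ * (2 * (A + 1 / 3)) = b := div_mul_cancel₀ b hd
      have hk : κ ^ 2 = A + 1 / 3 := by
        rw [hκ, div_pow]
        rw [div_eq_iff (pow_ne_zero 2 hd)]
        linear_combination h
      exact ⟨κ, by linear_combination κ * hk - hbk, by linear_combination 3 * hk⟩
end

section
/- The cubic map f(x) = x³ - 3Ax + b has a fixed point κ with f'(κ) = 0 (a superattracting fixed point) if and only if b² = 4A(A + 1/2)². -/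
/-- `f z = z³ - 3Az + b` (A, b real) has a fixed point `κ` with `f' κ = 0`
(a superattracting fixed point) iff `b² = 4A(A + 1/2)²` (the curve `Per₁(0)`). -/
theorem stmt_7 (A b : ℝ) :
    (∃ κ : ℂ, κ ^ 3 - 3 * (A : ℂ) * κ + (b : ℂ) = κ ∧ 3 * κ ^ 2 - 3 * (A : ℂ) = 0) ↔
      b ^ 2 = 4 * A * (A + 1 / 2) ^ 2 := by
  constructor
  · rintro ⟨κ, h1, h2⟩
    have hκ : κ ^ 2 = (A : ℂ) := by linear_combination h2 / 3
    have hb : (b : ℂ) = κ * (2 * A + 1) := by linear_combination h1 - κ * hκ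
    have : ((b ^ 2 : ℝ) : ℂ) = ((4 * A * (A + 1/2)^2 : ℝ) : ℂ) := by
      push_cast
      linear_combination (2*A+1)^2 * hκ + ((b:ℂ) + κ*(2*(A:ℂ)+1)) * hb
    exact_mod_cast this
  · intro h
    have key : ∀ κ : ℂ, κ ^ 2 = (A : ℂ) → (b : ℂ) = κ * (2 * A + 1) →
        κ ^ 3 - 3 * (A : ℂ) * κ + (b : ℂ) = κ ∧ 3 * κ ^ 2 - 3 * (A : ℂ) = 0 := by
      intro κ hκ hb
      constructor
      · linear_combination κ * hκ + hb
      · linear_combination 3 * hκ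
    by_cases hA : 2 * A + 1 = 0
    · have hA' : A = -1/2 := by linarith
      have hb : b = 0 := by nlinarith [sq_nonneg b, h]
      refine ⟨Complex.I * Real.sqrt (1/2), key _ ?_ ?_⟩
      · have hs : ((Real.sqrt (1/2) : ℝ) : ℂ) ^ 2 = ((1/2 : ℝ) : ℂ) := by
          norm_cast
          rw [Real.sq_sqrt] <;> norm_num
        push_cast at hs
        rw [hA']
        push_cast
        linear_combination ((Real.sqrt (1/2) : ℝ) : ℂ)^2 * Complex.I_sq - hs
      · rw [hb, hA']; push_cast; ring
    · refine ⟨(b : ℂ) / ((2 * A + 1 : ℝ) : ℂ), key _ ?_ ?_⟩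
      · have hA' : ((2 * A + 1 : ℝ) : ℂ) ≠ 0 := by exact_mod_cast hA
        have : ((b ^ 2 : ℝ) : ℂ) = ((4 * A * (A + 1/2)^2 : ℝ) : ℂ) := by exact_mod_cast h
        push_cast at this ⊢
        push_cast at hA'
        rw [div_pow, div_eq_iff (pow_ne_zero 2 hA')]
        linear_combination this
      · have hA' : ((2 * A + 1 : ℝ) : ℂ) ≠ 0 := by exact_mod_cast hA
        push_cast at hA' ⊢
        rw [div_mul_cancel₀ _ hA']
end

section
/- The cubic map f(x) = x³ - 3Ax + b has a fixed point κ with f'(κ) = -1 if and only if b² = 4(A - 1/3)(A + 2/3)². -/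
/-- `f z = z³ - 3Az + b` (A, b real) has a fixed point `κ` with `f' κ = -1`
iff `b² = 4(A - 1/3)(A + 2/3)²` (the curve `Per₁(-1)`). -/
theorem stmt_8 (A b : ℝ) :
    (∃ κ : ℂ, κ ^ 3 - 3 * (A : ℂ) * κ + (b : ℂ) = κ ∧ 3 * κ ^ 2 - 3 * (A : ℂ) = -1) ↔
      b ^ 2 = 4 * (A - 1 / 3) * (A + 2 / 3) ^ 2 := by
  constructor
  · rintro ⟨κ, h1, h2⟩
    have hκ2 : κ ^ 2 = (A : ℂ) - 1/3 := by linear_combination h2 / 3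
    have hb : (b : ℂ) = κ * (2 * A + 4/3) := by
      linear_combination h1 - κ * hκ2
    have key : ((b : ℂ)) ^ 2 = 4 * ((A : ℂ) - 1/3) * ((A : ℂ) + 2/3) ^ 2 := by
      linear_combination ((b : ℂ) + κ * (2 * A + 4/3)) * hb + (2 * (A : ℂ) + 4/3) ^ 2 * hκ2
    have key2 : ((b ^ 2 : ℝ) : ℂ) = ((4 * (A - 1/3) * (A + 2/3) ^ 2 : ℝ) : ℂ) := by
      push_cast; linear_combination key
    exact_mod_cast key2
  · intro h
    by_cases hA : A = -(2/3)
    · subst hA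
      have hb0 : b = 0 := by nlinarith [sq_nonneg b]
      subst hb0
      refine ⟨Complex.I, ?_, ?_⟩
      · push_cast
        linear_combination Complex.I * Complex.I_sq
      · push_cast
        linear_combination (3 : ℂ) * Complex.I_sq
    · have hd : (2 * A + 4/3 : ℝ) ≠ 0 := by
        intro hc; apply hA; linarith
      set κ : ℝ := b / (2 * A + 4/3) with hκ
      have hκ2 : κ ^ 2 = A - 1/3 := by
        rw [hκ, div_pow, div_eq_iff (pow_ne_zero 2 hd)]
        linear_combination h
      refine ⟨(κ : ℂ), ?_, ?_⟩
      · have hbr : κ ^ 3 - 3 * A * κ + b = κ := by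
          have hbκ : b = κ * (2 * A + 4/3) := by
            rw [hκ, div_mul_cancel₀ _ hd]
          linear_combination κ * hκ2 + hbκ
        exact_mod_cast hbr
      · have : (3 : ℝ) * κ ^ 2 - 3 * A = -1 := by rw [hκ2]; ring
        exact_mod_cast this
end

section
/- The cubic map f(x) = x³ - 3Ax + b has a fixed point κ with f'(κ) = 2 if and only if b² = 4(A + 2/3)(A + 1/6)². -/
/-- `f z = z³ - 3Az + b` (A, b real) has a fixed point `κ` with `f' κ = 2`
iff `b² = 4(A + 2/3)(A + 1/6)²` (the curve `Per₁(2)`). -/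
theorem stmt_9 (A b : ℝ) :
    (∃ κ : ℂ, κ ^ 3 - 3 * (A : ℂ) * κ + (b : ℂ) = κ ∧ 3 * κ ^ 2 - 3 * (A : ℂ) = 2) ↔
      b ^ 2 = 4 * (A + 2 / 3) * (A + 1 / 6) ^ 2 := by
  constructor
  · rintro ⟨κ, h1, h2⟩
    have h3 : κ ^ 2 = (A : ℂ) + 2 / 3 := by linear_combination h2 / 3
    have hb : (b : ℂ) = κ * (2 * (A : ℂ) + 1 / 3) := by
      linear_combination h1 - κ * h3
    have key : ((b ^ 2 : ℝ) : ℂ) = ((4 * (A + 2 / 3) * (A + 1 / 6) ^ 2 : ℝ) : ℂ) := by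
      push_cast
      linear_combination ((b : ℂ) + κ * (2 * (A : ℂ) + 1 / 3)) * hb
        + (2 * (A : ℂ) + 1 / 3) ^ 2 * h3
    exact_mod_cast key
  · intro h
    have hC : (b : ℂ) ^ 2 = 4 * ((A : ℂ) + 2 / 3) * ((A : ℂ) + 1 / 6) ^ 2 := by
      have := congrArg (fun x : ℝ => (x : ℂ)) h
      push_cast at this
      exact this
    by_cases hA : 2 * A + 1 / 3 = 0
    · have hA' : A = -(1 / 6) := by linarith
      subst hA'
      have hb2 : b ^ 2 = 0 := by rw [h]; ring
      have hb : b = 0 := pow_eq_zero_iff (n := 2) (by norm_num) |>.mp hb2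
      subst hb
      have hs : ((Real.sqrt 2 : ℝ) : ℂ) ^ 2 = 2 := by
        have : (Real.sqrt 2) ^ 2 = 2 := Real.sq_sqrt (by norm_num)
        exact_mod_cast this
      refine ⟨((Real.sqrt 2 / 2 : ℝ) : ℂ), ?_, ?_⟩
      · push_cast
        linear_combination ((Real.sqrt 2 : ℝ) : ℂ) / 8 * hs
      · push_cast
        linear_combination (3 / 4 : ℂ) * hs
    · have hA' : 2 * (A : ℂ) + 1 / 3 ≠ 0 := by
        intro hc
        apply hA
        have : ((2 * A + 1 / 3 : ℝ) : ℂ) = 0 := by push_cast; linear_combination hc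
        exact_mod_cast this
      set d : ℂ := 2 * (A : ℂ) + 1 / 3 with hd
      set κ : ℂ := (b : ℂ) / d with hκ
      have hkey : κ ^ 2 = (A : ℂ) + 2 / 3 := by
        rw [hκ, div_pow, div_eq_iff (pow_ne_zero 2 hA')]
        linear_combination hC
      have hk : κ * d = (b : ℂ) := div_mul_cancel₀ _ hA'
      refine ⟨κ, ?_, ?_⟩
      · linear_combination κ * hkey - hk
      · linear_combination 3 * hkey
end

section
/- For f(z) = z³ - 3a²z + b, the critical value f(a) = b - 2a³ is a fixed point of f equal to the cocritical point -2a if and only if b = 2a³ - 2a. In that case, setting A = a² and B = b², one has B = 4A(A - 1)², and the derivative of f at the fixed point -2a equals 9a² = 9A. -/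
/-- For `f z = z³ - 3a²z + b`, the critical value `f a = b - 2a³` is a fixed point of `f`
equal to the cocritical point `-2a` iff `b = 2a³ - 2a`; and in that case, with `A = a²`,
`B = b²`, one has `B = 4A(A-1)²` and `f' (-2a) = 9a² = 9A`. -/
theorem stmt_15 (a b : ℂ) (f : ℂ → ℂ) (hf : ∀ z, f z = z ^ 3 - 3 * a ^ 2 * z + b) :
    ((b - 2 * a ^ 3 = -2 * a ∧ f (-2 * a) = -2 * a) ↔ b = 2 * a ^ 3 - 2 * a) ∧
    (b = 2 * a ^ 3 - 2 * a →
      b ^ 2 = 4 * a ^ 2 * (a ^ 2 - 1) ^ 2 ∧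
      3 * (-2 * a) ^ 2 - 3 * a ^ 2 = 9 * a ^ 2) := by
  constructor
  · constructor
    · rintro ⟨h1, _⟩; linear_combination h1
    · intro h; rw [hf]; constructor <;> [linear_combination h; linear_combination h]
  · intro h; constructor
    · rw [h]; ring
    · ring
end

section
/- For f(z) = z³ - 3a²z + b with b = 2a³ + a ± i, the points -2a and f(a) = a ± i form a periodic orbit of period 2 for f: that is, f(-2a) = a ± i and f(a ± i) = -2a, and these two points are distinct provided 3a ≠ ∓i. -/
/-- For `f z = z³ - 3a²z + b` with `b = 2a³ + a ± i`, the points `-2a` and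
`f a = a ± i` form a period-2 orbit: `f (-2a) = a ± i` and `f (a ± i) = -2a`, these
two points being distinct provided `3a ≠ ∓i`. -/
theorem stmt_16 (a b ε : ℂ) (hε : ε = 1 ∨ ε = -1)
    (hb : b = 2 * a ^ 3 + a + ε * Complex.I)
    (f : ℂ → ℂ) (hf : ∀ z, f z = z ^ 3 - 3 * a ^ 2 * z + b) :
    f (-2 * a) = a + ε * Complex.I ∧
    f (a + ε * Complex.I) = -2 * a ∧
    (3 * a ≠ -ε * Complex.I → -2 * a ≠ a + ε * Complex.I) := by
  have hI := Complex.I_sq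
  rcases hε with hε | hε <;> subst hε <;>
  refine ⟨by rw [hf, hb]; ring, by rw [hf, hb]; first |  linear_combination (3*a+Complex.I) * Complex.I_sq | linear_combination (3*a-Complex.I)*Complex.I_sq, ?_⟩ <;>
  · intro h hc
    apply h
    linear_combination -hc
end
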